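/- Let m, n ∈ ℕ with n ≥ 2, ℓ ∈ ℕ₀, c ∈ ℝ, and z ∈ ℂ. For the function u(r) = r^z on (0,∞), applying the m-fold iterate of the map f ↦ −f'' + ((n+2ℓ−1)(n+2ℓ−3)/(4r²))·f to u and adding c·r^{−2m}·u(r) yields D_{m,n,ℓ}(c;z)·r^{z−2m} for every r > 0; that is, τ_{m,n,ℓ}(c) r^z = D_{m,n,ℓ}(c;z) r^{z−2m}. -/

import Mathlib

noncomputable section

/-- The degree-`2m` polynomial
`D_{m,n,ℓ}(c;z) = (-1)^m ∏_{j=1}^m (z - (n+2ℓ+4j-5)/2)(z + (n+2ℓ-4j+1)/2) + c`. -/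
def Dm (m n ℓ : ℕ) (c : ℝ) (z : ℂ) : ℂ :=
  (-1) ^ m * ∏ j ∈ Finset.Icc 1 m,
      ((z - ((n : ℂ) + 2 * ℓ + 4 * j - 5) / 2) * (z + ((n : ℂ) + 2 * ℓ - 4 * j + 1) / 2))
    + (c : ℂ)

/-- The formal differential expression `f ↦ -f'' + ((n+2ℓ-1)(n+2ℓ-3)/(4r²))·f`. -/
def negB (n ℓ : ℕ) (f : ℝ → ℂ) : ℝ → ℂ := fun r =>
  -(deriv (deriv f) r)
    + (((((n : ℝ) + 2 * ℓ - 1) * ((n : ℝ) + 2 * ℓ - 3)) / (4 * r ^ 2) : ℝ) : ℂ) * f r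

/-!
On `(0, ∞)` the operator `negB n ℓ` maps `r ^ w` to `q(w) r ^ (w - 2)`, where
`q(w) = (N - 1)(N - 3)/4 - w(w - 1)` with `N = n + 2ℓ` is `negBSymbol n ℓ w`.
Iterating from `w = z` multiplies by `q(z), q(z - 2), …, q(z - 2(m - 1))`, and
`-q(z - 2(j - 1))` is exactly the `j`-th factor `(z - (N + 4j - 5)/2)(z + (N - 4j + 1)/2)`
of `Dm`. The term `c r ^ (-2m) r ^ z` supplies the constant `c`.
-/

open Complex Filter

def negBSymbol (n ℓ : ℕ) (w : ℂ) : ℂ :=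
  ((n : ℂ) + 2 * ℓ - 1) * ((n : ℂ) + 2 * ℓ - 3) / 4 - w * (w - 1)

lemma hasDerivAt_ofReal_cpow_const_of_pos (w : ℂ) {x : ℝ} (hx : 0 < x) :
    HasDerivAt (fun s : ℝ => (s : ℂ) ^ w) (w * (x : ℂ) ^ (w - 1)) x := by
  simpa using ((hasDerivAt_id (x : ℂ)).cpow_const (c := w)
    (ofReal_mem_slitPlane.2 hx)).comp_ofReal (z := x)

lemma deriv_deriv_ofReal_cpow_const_of_pos (w : ℂ) {x : ℝ} (hx : 0 < x) :
    deriv (deriv fun s : ℝ => (s : ℂ) ^ w) x = w * (w - 1) * (x : ℂ) ^ (w - 2) := by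
  have hderiv : (deriv fun s : ℝ => (s : ℂ) ^ w) =ᶠ[nhds x] fun s => w * (s : ℂ) ^ (w - 1) := by
    filter_upwards [eventually_gt_nhds hx] with s hs
    exact (hasDerivAt_ofReal_cpow_const_of_pos w hs).deriv
  rw [hderiv.deriv_eq, ((hasDerivAt_ofReal_cpow_const_of_pos (w - 1) hx).const_mul w).deriv]
  ring_nf

lemma negB_congr_of_eventuallyEq (n ℓ : ℕ) {f g : ℝ → ℂ} {r : ℝ} (h : f =ᶠ[nhds r] g) :
    negB n ℓ f r = negB n ℓ g r := by
  rw [negB, negB, h.eq_of_nhds, h.deriv.deriv_eq]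

lemma negB_const_mul (n ℓ : ℕ) (A : ℂ) (f : ℝ → ℂ) (r : ℝ) :
    negB n ℓ (fun s => A * f s) r = A * negB n ℓ f r := by
  simp only [negB, deriv_const_mul_field']
  ring

lemma negB_ofReal_cpow (n ℓ : ℕ) (w : ℂ) {r : ℝ} (hr : 0 < r) :
    negB n ℓ (fun s : ℝ => (s : ℂ) ^ w) r = negBSymbol n ℓ w * (r : ℂ) ^ (w - 2) := by
  have hrc : (r : ℂ) ≠ 0 := ofReal_ne_zero.2 hr.ne'
  have hsplit : (r : ℂ) ^ w = (r : ℂ) ^ (w - 2) * (r : ℂ) ^ 2 := by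
    rw [← cpow_natCast, ← cpow_add _ _ hrc]
    ring_nf
  rw [negB, deriv_deriv_ofReal_cpow_const_of_pos w hr, hsplit, negBSymbol]
  push_cast
  field_simp
  ring

lemma Dm_zero_succ (k n ℓ : ℕ) (z : ℂ) :
    Dm (k + 1) n ℓ 0 z = Dm k n ℓ 0 z * negBSymbol n ℓ (z - 2 * k) := by
  simp only [Dm, Finset.prod_Icc_succ_top (Nat.le_add_left 1 k), negBSymbol]
  push_cast
  ring

lemma iterate_negB_ofReal_cpow (n ℓ k : ℕ) (z : ℂ) {r : ℝ} (hr : 0 < r) :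
    (negB n ℓ)^[k] (fun s : ℝ => (s : ℂ) ^ z) r = Dm k n ℓ 0 z * (r : ℂ) ^ (z - 2 * k) := by
  induction k generalizing r with
  | zero => simp [Dm]
  | succ k ih =>
    have hprev : (negB n ℓ)^[k] (fun s : ℝ => (s : ℂ) ^ z)
        =ᶠ[nhds r] fun s => Dm k n ℓ 0 z * (s : ℂ) ^ (z - 2 * k) := by
      filter_upwards [eventually_gt_nhds hr] with s hs using ih hs
    rw [Function.iterate_succ_apply', negB_congr_of_eventuallyEq n ℓ hprev, negB_const_mul,
      negB_ofReal_cpow n ℓ _ hr, Dm_zero_succ]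
    push_cast
    ring_nf

theorem stmt14_general (m n ℓ : ℕ) (c : ℝ) (z : ℂ)
    (r : ℝ) (hr : 0 < r) :
    (negB n ℓ)^[m] (fun s : ℝ => (s : ℂ) ^ z) r
        + (c : ℂ) * ((r : ℂ) ^ (2 * m))⁻¹ * (r : ℂ) ^ z
      = Dm m n ℓ c z * (r : ℂ) ^ (z - 2 * (m : ℂ)) := by
  have hrc : (r : ℂ) ≠ 0 := ofReal_ne_zero.2 hr.ne'
  have hshift : (r : ℂ) ^ (z - 2 * (m : ℂ)) = (r : ℂ) ^ z * ((r : ℂ) ^ (2 * m))⁻¹ := by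
    rw [cpow_sub _ _ hrc, div_eq_mul_inv, ← cpow_natCast]
    push_cast
    rfl
  have hDm : Dm m n ℓ c z = Dm m n ℓ 0 z + c := by simp [Dm]
  rw [iterate_negB_ofReal_cpow n ℓ m z hr, hDm, hshift]
  ring

/-- `τ_{m,n,ℓ}(c) r^z = D_{m,n,ℓ}(c;z) r^{z-2m}` on `(0,∞)`. -/
theorem stmt14 (m n ℓ : ℕ) (hm : 1 ≤ m) (hn : 2 ≤ n) (c : ℝ) (z : ℂ)
    (r : ℝ) (hr : 0 < r) :
    (negB n ℓ)^[m] (fun s : ℝ => (s : ℂ) ^ z) r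
        + (c : ℂ) * ((r : ℂ) ^ (2 * m))⁻¹ * (r : ℂ) ^ z
      = Dm m n ℓ c z * (r : ℂ) ^ (z - 2 * (m : ℂ)) :=
  stmt14_general m n ℓ c z r hr
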